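/- Let G be a finite simple graph on n ≥ 1 vertices with Kirchhoff (Laplacian) matrix K. Then for every 1 ≤ k ≤ n, the k-th smallest eigenvalue of K satisfies λ_k ≥ d_k − (n − k), where d_1 ≤ … ≤ d_n are the vertex degrees of G listed in increasing order. -/

import Mathlib

open Matrix Finset
open scoped InnerProductSpace

/-!
A Courant–Fischer argument. Let `S` index the `k` smallest eigenvalues and let `U` be the
`n - k + 1` vertices of largest degree, all of degree at least `d_k`. Since `k + (n - k + 1) > n`,
some nonzero `x` is supported on `U` and lies in the span of the eigenvectors indexed by `S`, so
`xᵀ K x ≤ λ_k ‖x‖²`. On the other hand `xᵀ K x = ∑_{uv ∈ E} (x_u - x_v)²` is at least the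
contribution `∑_{v ∈ U} |N(v) \ U| x_v²` of the edges leaving `U`, and a vertex of `U` has at most
`n - k` neighbours inside `U`, so `|N(v) \ U| ≥ d_k - (n - k)`.
-/

theorem Tuple.exists_card_eq_forall_le_apply_sort {α : Type*} [LinearOrder α] {n : ℕ}
    (f : Fin n → α) (i : Fin n) :
    ∃ s : Finset (Fin n), #s = i + 1 ∧ ∀ j ∈ s, f j ≤ f (sort f i) := by
  refine ⟨(Iic i).map (sort f).toEmbedding, by simp, ?_⟩
  simp only [mem_map_equiv, mem_Iic]
  intro j hj
  simpa using monotone_sort f hj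

theorem Tuple.exists_card_eq_forall_apply_sort_le {α : Type*} [LinearOrder α] {n : ℕ}
    (f : Fin n → α) (i : Fin n) :
    ∃ s : Finset (Fin n), #s = n - i ∧ ∀ j ∈ s, f (sort f i) ≤ f j := by
  refine ⟨(Ici i).map (sort f).toEmbedding, by simp, ?_⟩
  simp only [mem_map_equiv, mem_Ici]
  intro j hj
  simpa using monotone_sort f hj

theorem Submodule.exists_mem_mem_ne_zero_of_finrank_lt_add {K V : Type*} [DivisionRing K]
    [AddCommGroup V] [Module K V] [FiniteDimensional K V] {s t : Submodule K V}
    (h : Module.finrank K V < Module.finrank K s + Module.finrank K t) :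
    ∃ x ∈ s, x ∈ t ∧ x ≠ 0 := by
  by_contra! hst
  exact h.not_ge (finrank_add_finrank_le_of_disjoint (disjoint_def.2 hst))

theorem LinearIndependent.finrank_span_image {K V ι : Type*} [DivisionRing K]
    [AddCommGroup V] [Module K V] {v : ι → V} (hv : LinearIndependent K v) (s : Finset ι) :
    Module.finrank K (Submodule.span K (v '' s)) = #s := by
  rw [Set.image_eq_range]
  exact (finrank_span_eq_card (hv.comp _ Subtype.val_injective)).trans (by simp)

theorem Orthonormal.inner_eq_zero_of_mem_span_image {𝕜 E ι : Type*} [RCLike 𝕜]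
    [NormedAddCommGroup E] [InnerProductSpace 𝕜 E] {v : ι → E} (hv : Orthonormal 𝕜 v)
    {s : Set ι} {i : ι} (hi : i ∉ s) {x : E} (hx : x ∈ Submodule.span 𝕜 (v '' s)) :
    ⟪x, v i⟫_𝕜 = 0 := by
  obtain ⟨l, hl, rfl⟩ := (Finsupp.mem_span_image_iff_linearCombination 𝕜).1 hx
  exact hv.inner_finsupp_eq_zero hi hl

theorem OrthonormalBasis.exists_ne_zero_forall_inner_eq_zero {𝕜 E ι κ : Type*} [RCLike 𝕜]
    [NormedAddCommGroup E] [InnerProductSpace 𝕜 E] [Fintype ι] [Fintype κ]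
    (b : OrthonormalBasis ι 𝕜 E) (c : OrthonormalBasis κ 𝕜 E) {s : Finset ι} {t : Finset κ}
    (h : Module.finrank 𝕜 E < #s + #t) :
    ∃ x : E, x ≠ 0 ∧ (∀ i ∉ s, ⟪x, b i⟫_𝕜 = 0) ∧ ∀ j ∉ t, ⟪x, c j⟫_𝕜 = 0 := by
  have : FiniteDimensional 𝕜 E := .of_basis b.toBasis
  rw [← b.orthonormal.linearIndependent.finrank_span_image,
    ← c.orthonormal.linearIndependent.finrank_span_image] at h
  obtain ⟨x, hxs, hxt, hx0⟩ := Submodule.exists_mem_mem_ne_zero_of_finrank_lt_add h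
  exact ⟨x, hx0, fun i hi => b.orthonormal.inner_eq_zero_of_mem_span_image hi hxs,
    fun j hj => c.orthonormal.inner_eq_zero_of_mem_span_image hj hxt⟩

theorem Matrix.IsHermitian.dotProduct_mulVec_le_mul_dotProduct_self {ι : Type*} [Fintype ι]
    [DecidableEq ι] {A : Matrix ι ι ℝ} (hA : A.IsHermitian) {μ : ℝ} {x : EuclideanSpace ℝ ι}
    (hx : ∀ i, μ < hA.eigenvalues i → ⟪x, hA.eigenvectorBasis i⟫_ℝ = 0) :
    ⇑x ⬝ᵥ A *ᵥ ⇑x ≤ μ * (⇑x ⬝ᵥ ⇑x) := by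
  have hdot (y : EuclideanSpace ℝ ι) : ⇑x ⬝ᵥ ⇑y = ⟪x, y⟫_ℝ := by
    simp [EuclideanSpace.inner_eq_star_dotProduct, dotProduct_comm]
  have hAb (i : ι) : ⟪hA.eigenvectorBasis i, toEuclideanLin A x⟫_ℝ =
      hA.eigenvalues i * ⟪x, hA.eigenvectorBasis i⟫_ℝ := by
    rw [← isSymmetric_toEuclideanLin_iff.mpr hA, toLpLin_apply, hA.mulVec_eigenvectorBasis]
    simp [inner_smul_left, real_inner_comm]
  have hquad : ⇑x ⬝ᵥ A *ᵥ ⇑x = ∑ i, hA.eigenvalues i * ⟪x, hA.eigenvectorBasis i⟫_ℝ ^ 2 := by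
    rw [show A *ᵥ ⇑x = ⇑(toEuclideanLin A x) from rfl, hdot,
      ← hA.eigenvectorBasis.sum_inner_mul_inner x]
    simp only [hAb]
    exact sum_congr rfl fun i _ => by ring
  have hnorm : ⇑x ⬝ᵥ ⇑x = ∑ i, ⟪x, hA.eigenvectorBasis i⟫_ℝ ^ 2 := by
    rw [hdot, ← hA.eigenvectorBasis.sum_inner_mul_inner x]
    simp [sq, real_inner_comm]
  rw [hquad, hnorm, mul_sum]
  refine sum_le_sum fun i _ => ?_
  rcases le_or_gt (hA.eigenvalues i) μ with hi | hi
  · exact mul_le_mul_of_nonneg_right hi (sq_nonneg _)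
  · simp [hx i hi]

namespace SimpleGraph

variable {V : Type*} [Fintype V] [DecidableEq V] (G : SimpleGraph V) [DecidableRel G.Adj]

theorem degree_le_card_neighborFinset_sdiff_add {s : Finset V} {v : V} (hv : v ∈ s) :
    G.degree v ≤ #(G.neighborFinset v \ s) + (#s - 1) := by
  have hinter : G.neighborFinset v ∩ s ⊆ s.erase v := fun w hw => by
    rw [mem_inter, mem_neighborFinset] at hw
    exact mem_erase.2 ⟨hw.1.ne', hw.2⟩
  have := card_le_card hinter
  rw [card_erase_of_mem hv] at this
  rw [← card_neighborFinset_eq_degree, ← card_sdiff_add_card_inter _ s]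
  omega

theorem sum_card_neighborFinset_sdiff_mul_sq_le_dotProduct_mulVec_lapMatrix {s : Finset V}
    {x : V → ℝ} (hx : ∀ v ∉ s, x v = 0) :
    ∑ v ∈ s, #(G.neighborFinset v \ s) * x v ^ 2 ≤ x ⬝ᵥ G.lapMatrix ℝ *ᵥ x := by
  let f (i j : V) : ℝ := if i ∈ s ∧ j ∈ G.neighborFinset i \ s then x i ^ 2 else 0
  have hf : ∑ i, ∑ j, f i j = ∑ v ∈ s, #(G.neighborFinset v \ s) * x v ^ 2 := by
    simp only [f, ite_and, sum_ite_irrel, sum_const_zero, sum_ite_mem, univ_inter, sum_const,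
      nsmul_eq_mul]
  have hpair (i j : V) : f i j + f j i ≤ if G.Adj i j then (x i - x j) ^ 2 else 0 := by
    simp only [f, mem_sdiff, mem_neighborFinset]
    split_ifs <;> simp_all [G.adj_comm, sq_nonneg]
  have hsum := sum_le_sum fun i (_ : i ∈ univ) => sum_le_sum fun j (_ : j ∈ univ) => hpair i j
  rw [← toLinearMap₂'_apply', lapMatrix_toLinearMap₂']
  simp only [sum_add_distrib] at hsum
  rw [sum_comm (f := fun i j => f j i), hf] at hsum
  linarith

theorem mul_dotProduct_self_le_dotProduct_mulVec_lapMatrix {s : Finset V} {x : V → ℝ}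
    (hx : ∀ v ∉ s, x v = 0) {δ : ℕ} (hδ : ∀ v ∈ s, δ ≤ G.degree v) :
    ((δ : ℝ) - ((#s - 1 : ℕ) : ℝ)) * (x ⬝ᵥ x) ≤ x ⬝ᵥ G.lapMatrix ℝ *ᵥ x := by
  have hnorm : x ⬝ᵥ x = ∑ v ∈ s, x v ^ 2 := by
    rw [dotProduct, ← sum_subset (subset_univ s) fun v _ hv => by simp [hx v hv]]
    simp [sq]
  refine le_trans ?_ (G.sum_card_neighborFinset_sdiff_mul_sq_le_dotProduct_mulVec_lapMatrix hx)
  rw [hnorm, mul_sum]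
  refine sum_le_sum fun v hv => mul_le_mul_of_nonneg_right ?_ (sq_nonneg _)
  have := (hδ v hv).trans (G.degree_le_card_neighborFinset_sdiff_add hv)
  rw [sub_le_iff_le_add]
  exact_mod_cast this

end SimpleGraph

/-- For a finite simple graph on `n ≥ 1` vertices with Kirchhoff (Laplacian)
matrix `K`, the `k`-th smallest eigenvalue satisfies `λ_k ≥ d_k - (n - k)`,
where `d_1 ≤ ⋯ ≤ d_n` are the sorted vertex degrees. -/
theorem graph_laplacian_eigenvalue_lower_bound
    (n : ℕ) (G : SimpleGraph (Fin n)) [DecidableRel G.Adj]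
    (hK : (G.lapMatrix ℝ).IsHermitian)
    (lam : Fin n → ℝ)
    (hlam : lam = hK.eigenvalues ∘ Tuple.sort hK.eigenvalues)
    (d : Fin n → ℕ)
    (hd : d = (fun v => G.degree v) ∘ Tuple.sort (fun v => G.degree v)) :
    ∀ (k : ℕ) (hk1 : 1 ≤ k) (hkn : k ≤ n),
      (d ⟨k - 1, by omega⟩ : ℝ) - ((n - k : ℕ) : ℝ) ≤ lam ⟨k - 1, by omega⟩ := by
  intro k hk1 hkn
  set i : Fin n := ⟨k - 1, by omega⟩
  have hi : (i : ℕ) = k - 1 := rfl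
  obtain ⟨S, hS, hSle⟩ := Tuple.exists_card_eq_forall_le_apply_sort hK.eigenvalues i
  obtain ⟨U, hU, hUle⟩ := Tuple.exists_card_eq_forall_apply_sort_le (fun v => G.degree v) i
  obtain ⟨x, hx0, hxS, hxU⟩ := hK.eigenvectorBasis.exists_ne_zero_forall_inner_eq_zero
    (EuclideanSpace.basisFun (Fin n) ℝ) (s := S) (t := U)
    (by rw [finrank_euclideanSpace_fin, hS, hU]; omega)
  have hupper : ⇑x ⬝ᵥ G.lapMatrix ℝ *ᵥ ⇑x ≤ lam i * (⇑x ⬝ᵥ ⇑x) :=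
    hK.dotProduct_mulVec_le_mul_dotProduct_self fun j hj =>
      hxS j fun hjS => (hSle j hjS).not_gt (by rwa [hlam] at hj)
  have hlower : ((d i : ℝ) - ((n - k : ℕ) : ℝ)) * (⇑x ⬝ᵥ ⇑x) ≤ ⇑x ⬝ᵥ G.lapMatrix ℝ *ᵥ ⇑x := by
    rw [show n - k = #U - 1 by omega]
    refine G.mul_dotProduct_self_le_dotProduct_mulVec_lapMatrix (fun v hv => ?_) ?_
    · simpa [EuclideanSpace.inner_single_right] using hxU v hv
    · simpa [hd] using hUle
  have hpos : 0 < ⇑x ⬝ᵥ ⇑x := by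
    refine (sum_nonneg fun v _ => mul_self_nonneg (x v)).lt_of_ne' ?_
    rw [← dotProduct, Ne, dotProduct_self_eq_zero]
    simpa using hx0
  exact le_of_mul_le_mul_right (hlower.trans hupper) hpos
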